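/- In the piecewise setting on [−1,1], assume additionally that every interior breakpoint satisfies b_i ∈ [−0.9, 0.9]. Then there exists a universal constant C > 0 (independent of n, K, g and the breakpoints) such that for every integer n ≥ 2 the jump term B_n = (1/(2√(2n+1)))·Σ_{i=1}^{K} (g_i(b_i) − g_{i+1}(b_i))·(P_{n+1}(b_i) − P_{n−1}(b_i)) satisfies |B_n| ≤ C·S/n, where S = Σ_{i=1}^K |g_{i+1}(b_i) − g_i(b_i)|. -/

import Mathlib

open MeasureTheory Set

noncomputable def legendreP (n : ℕ) (y : ℝ) : ℝ :=
  (1 / ((2 : ℝ) ^ n * (n.factorial : ℝ))) *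
    iteratedDeriv n (fun x : ℝ => (x ^ 2 - 1) ^ n) y

noncomputable def hzeta (s a : ℝ) : ℝ := ∑' k : ℕ, ((k : ℝ) + a) ^ (-s)

noncomputable def legCoeff (g : ℝ → ℝ) (n : ℕ) : ℝ :=
  (Real.sqrt (2 * (n : ℝ) + 1) / 2) * ∫ y in (-1 : ℝ)..1, g y * legendreP n y

noncomputable def Aterm (K : ℕ) (b : ℕ → ℝ) (G : ℕ → ℝ → ℝ) (n : ℕ) : ℝ :=
  -(1 / (2 * Real.sqrt (2 * (n : ℝ) + 1))) *
    ∑ i ∈ Finset.range (K + 1),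
      ∫ y in (b i)..(b (i + 1)),
        derivWithin (G i) (Set.Icc (b i) (b (i + 1))) y *
          (legendreP (n + 1) y - legendreP (n - 1) y)

noncomputable def Bterm (K : ℕ) (b : ℕ → ℝ) (G : ℕ → ℝ → ℝ) (n : ℕ) : ℝ :=
  (1 / (2 * Real.sqrt (2 * (n : ℝ) + 1))) *
    ∑ i ∈ Finset.Icc 1 K,
      (G (i - 1) (b i) - G i (b i)) *
        (legendreP (n + 1) (b i) - legendreP (n - 1) (b i))

noncomputable def jumpSum (K : ℕ) (b : ℕ → ℝ) (G : ℕ → ℝ → ℝ) : ℝ :=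
  ∑ i ∈ Finset.Icc 1 K, |G i (b i) - G (i - 1) (b i)|

/-!
For `|b| ≤ 0.9` one has `|P_m(b)| ≤ 5 / √(2m + 1)`, and `B_n` is a combination of the values
`P_{n+1}(b_i) - P_{n-1}(b_i)` weighted by the jumps, which gives `|B_n| ≤ 5 S / n`.

The pointwise bound comes from Sonin's function. If `p` solves Legendre's equation
`(1 - x²) p'' - 2x p' + c p = 0`, then `W = c (1 - x²) p² + (1 - x²)² p'²` satisfies
`W' = -2c x p²` and `W(1) = 0`, so
`c (1 - b²) p(b)² ≤ W(b) = ∫_b^1 2c x p² ≤ 2c ∫_{-1}^1 p²`.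
For `p = P_m` the right-hand side is `4c / (2m + 1)`: by Rodrigues' formula and `m` integrations
by parts, `∫ P_m² = (2m)! ∫ (1 - x²)^m / (2^m m!)²`, and `∫ (1 - x²)^m` follows from its
two-term recurrence.
-/

open Polynomial
open scoped Nat

lemma Polynomial.Monic.iterate_derivative_natDegree {R : Type*} [Semiring R] {p : R[X]}
    (hp : p.Monic) :
    derivative^[p.natDegree] p = C (p.natDegree ! : R) := by
  have h0 : (derivative^[p.natDegree] p).natDegree = 0 := by
    have := natDegree_iterate_derivative p p.natDegree
    omega
  rw [eq_C_of_natDegree_eq_zero h0, coeff_iterate_derivative, zero_add, hp.coeff_natDegree,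
    Nat.descFactorial_self, nsmul_one]

section Rodrigues

variable (R : Type*) [CommRing R]

noncomputable def rodrigues (n : ℕ) : R[X] := derivative^[n] ((X ^ 2 - 1) ^ n)

variable {R}

lemma iterate_derivative_succ_mul_X (m : ℕ) (p : R[X]) :
    derivative^[m + 1] (p * X) =
      derivative^[m + 1] p * X + ((m : R[X]) + 1) * derivative^[m] p := by
  simpa [nsmul_eq_mul] using iterate_derivative_mul_X (n := m + 1) p

lemma derivative_X_sq_sub_one_pow_mul (n : ℕ) :
    derivative ((X ^ 2 - 1 : R[X]) ^ n) * (X ^ 2 - 1) =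
      ((2 * n : ℕ) : R[X]) * ((X ^ 2 - 1) ^ n * X) := by
  rcases n with _ | n
  · simp
  · simp only [derivative_pow_succ, derivative_sub, derivative_X, derivative_one, map_add,
      map_natCast, C_1]
    push_cast
    ring

lemma rodrigues_ode (n : ℕ) :
    (X ^ 2 - 1) * derivative (derivative (rodrigues R n)) + 2 * X * derivative (rodrigues R n) =
      C ((n : R) * (n + 1)) * rodrigues R n := by
  rcases n with _ | m
  · simp [rodrigues]
  have h := congrArg (derivative^[m + 2]) (derivative_X_sq_sub_one_pow_mul (R := R) (m + 1))
  rw [show ∀ q : R[X], q * (X ^ 2 - 1) = q * X * X - q from fun q => by ring,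
    iterate_derivative_sub, iterate_derivative_succ_mul_X, iterate_derivative_succ_mul_X,
    iterate_derivative_succ_mul_X, iterate_derivative_natCast_mul,
    iterate_derivative_succ_mul_X] at h
  simp only [← Function.iterate_succ_apply] at h
  simp only [rodrigues, Function.iterate_succ_apply', map_mul, map_add, map_natCast,
    map_one] at h ⊢
  push_cast at h ⊢
  linear_combination h

lemma monic_X_sq_sub_one [Nontrivial R] : (X ^ 2 - 1 : R[X]).Monic := by
  simpa using monic_X_pow_sub_C (1 : R) two_ne_zero

lemma eval_iterate_derivative_X_sq_sub_one_pow_eq_zero {n j : ℕ} (hj : j < n) {x : R}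
    (hx : x ^ 2 = 1) : (derivative^[j] ((X ^ 2 - 1 : R[X]) ^ n)).eval x = 0 := by
  obtain ⟨r, hr⟩ := pow_sub_dvd_iterate_derivative_pow (X ^ 2 - 1 : R[X]) n j
  rw [hr, eval_mul, eval_pow]
  simp [hx, Nat.sub_ne_zero_of_lt hj]

lemma derivative_sonin_of_legendre_ode {p : R[X]} {c : R}
    (hp : (X ^ 2 - 1) * derivative (derivative p) + 2 * X * derivative p = C c * p) :
    derivative (C c * (1 - X ^ 2) * p ^ 2 + (1 - X ^ 2) ^ 2 * derivative p ^ 2) =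
      -(C c * (2 * X * p ^ 2)) := by
  simp only [derivative_mul, derivative_add, derivative_sub, derivative_pow, derivative_C,
    derivative_X, derivative_one, map_ofNat, Nat.cast_ofNat, Nat.add_one_sub_one, pow_one,
    zero_mul, mul_one, zero_sub, zero_add]
  linear_combination (-2 * (1 - X ^ 2) * derivative p) * hp

end Rodrigues

lemma integral_eval_derivative (p : ℝ[X]) (a b : ℝ) :
    ∫ x in a..b, (derivative p).eval x = p.eval b - p.eval a :=
  intervalIntegral.integral_eq_sub_of_hasDerivAt (fun x _ => p.hasDerivAt x)
    (p.derivative.continuous.intervalIntegrable a b)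

lemma integral_eval_derivative_mul {a b : ℝ} (p q : ℝ[X]) (ha : q.eval a = 0)
    (hb : q.eval b = 0) :
    ∫ x in a..b, (derivative p).eval x * q.eval x =
      -∫ x in a..b, p.eval x * (derivative q).eval x := by
  have h := integral_eval_derivative (p * q) a b
  simp only [derivative_mul, eval_add, eval_mul, ha, hb, mul_zero, sub_zero] at h
  rw [intervalIntegral.integral_add (Continuous.intervalIntegrable (by fun_prop) _ _)
    (Continuous.intervalIntegrable (by fun_prop) _ _)] at h
  linarith

lemma integral_eval_iterate_derivative_mul {a b : ℝ} (p q : ℝ[X]) (k : ℕ)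
    (hq : ∀ j < k, (derivative^[j] q).eval a = 0 ∧ (derivative^[j] q).eval b = 0) :
    ∫ x in a..b, (derivative^[k] p).eval x * q.eval x =
      (-1) ^ k * ∫ x in a..b, p.eval x * (derivative^[k] q).eval x := by
  induction k generalizing p with
  | zero => simp
  | succ k ih =>
    obtain ⟨ha, hb⟩ := hq k k.lt_succ_self
    rw [Function.iterate_succ_apply, ih _ fun j hj => hq j (hj.trans k.lt_succ_self),
      integral_eval_derivative_mul p _ ha hb, Function.iterate_succ_apply']
    ring

lemma integral_one_sub_sq_pow_succ (n : ℕ) :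
    (2 * (n : ℝ) + 3) * ∫ x in (-1 : ℝ)..1, (1 - x ^ 2) ^ (n + 1) =
      (2 * (n : ℝ) + 2) * ∫ x in (-1 : ℝ)..1, (1 - x ^ 2) ^ n := by
  have hderiv : derivative (X * (1 - X ^ 2) ^ (n + 1) : ℝ[X]) =
      C (2 * (n : ℝ) + 3) * (1 - X ^ 2) ^ (n + 1) - C (2 * (n : ℝ) + 2) * (1 - X ^ 2) ^ n := by
    simp only [derivative_mul, derivative_X, derivative_pow_succ, derivative_sub, derivative_one,
      map_add, map_mul, map_natCast, map_ofNat, C_1]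
    ring
  have h := integral_eval_derivative (X * (1 - X ^ 2) ^ (n + 1)) (-1) 1
  simp only [hderiv, eval_sub, eval_mul, eval_C, eval_pow, eval_X, eval_one] at h
  rw [intervalIntegral.integral_sub (Continuous.intervalIntegrable (by fun_prop) _ _)
    (Continuous.intervalIntegrable (by fun_prop) _ _), intervalIntegral.integral_const_mul,
    intervalIntegral.integral_const_mul] at h
  norm_num at h
  linarith

lemma integral_one_sub_sq_pow (n : ℕ) :
    ∫ x in (-1 : ℝ)..1, (1 - x ^ 2) ^ n = 2 * (2 ^ n * n ! : ℝ) ^ 2 / (2 * n + 1)! := by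
  induction n with
  | zero => norm_num
  | succ n ih =>
    have hrec : ∫ x in (-1 : ℝ)..1, (1 - x ^ 2) ^ (n + 1) =
        (2 * (n : ℝ) + 2) / (2 * n + 3) * ∫ x in (-1 : ℝ)..1, (1 - x ^ 2) ^ n := by
      field_simp
      linear_combination integral_one_sub_sq_pow_succ n
    rw [hrec, ih, show 2 * (n + 1) + 1 = 2 * n + 1 + 1 + 1 by ring]
    simp only [Nat.factorial_succ]
    push_cast
    field_simp
    ring

lemma integral_sq_eval_rodrigues (n : ℕ) :
    ∫ x in (-1 : ℝ)..1, (rodrigues ℝ n).eval x ^ 2 =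
      2 * (2 ^ n * n ! : ℝ) ^ 2 / (2 * n + 1) := by
  set Q : ℝ[X] := (X ^ 2 - 1) ^ n
  have hdeg : Q.natDegree = 2 * n := by
    rw [monic_X_sq_sub_one.natDegree_pow, ← C_1, natDegree_X_pow_sub_C, mul_comm]
  have htop : derivative^[n] (rodrigues ℝ n) = C ((2 * n) ! : ℝ) := by
    rw [rodrigues, ← Function.iterate_add_apply, ← two_mul, ← hdeg,
      (monic_X_sq_sub_one.pow n).iterate_derivative_natDegree]
  have hparts := integral_eval_iterate_derivative_mul (a := -1) (b := 1) (rodrigues ℝ n) Q n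
    fun j hj => ⟨eval_iterate_derivative_X_sq_sub_one_pow_eq_zero hj (by norm_num),
      eval_iterate_derivative_X_sq_sub_one_pow_eq_zero hj (by norm_num)⟩
  have hQ : ∀ x : ℝ, Q.eval x = (-1) ^ n * (1 - x ^ 2) ^ n := fun x => by
    simp only [Q, eval_pow, eval_sub, eval_X, eval_one, ← mul_pow]
    ring
  simp only [htop, eval_C, hQ, ← mul_assoc, intervalIntegral.integral_const_mul,
    integral_one_sub_sq_pow] at hparts
  rw [show derivative^[n] Q = rodrigues ℝ n from rfl, Nat.factorial_succ] at hparts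
  simp only [← sq] at hparts
  push_cast at hparts
  field_simp at hparts ⊢
  linear_combination -hparts

lemma one_sub_sq_mul_sq_eval_le_of_legendre_ode {p : ℝ[X]} {c : ℝ} (hc : 0 < c)
    (hp : (X ^ 2 - 1) * derivative (derivative p) + 2 * X * derivative p = C c * p) {b : ℝ}
    (hb : b ∈ Set.Icc (-1) 1) :
    (1 - b ^ 2) * p.eval b ^ 2 ≤ 2 * ∫ x in (-1 : ℝ)..1, p.eval x ^ 2 := by
  set W : ℝ[X] := C c * (1 - X ^ 2) * p ^ 2 + (1 - X ^ 2) ^ 2 * derivative p ^ 2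
  have hWb : W.eval b = ∫ x in b..1, c * (2 * x * p.eval x ^ 2) := by
    have hdW : derivative W = -(C c * (2 * X * p ^ 2)) := derivative_sonin_of_legendre_ode hp
    have h := integral_eval_derivative W b 1
    simp only [hdW, eval_neg, eval_mul, eval_C, eval_X, eval_pow, eval_ofNat,
      intervalIntegral.integral_neg] at h
    have hW1 : W.eval 1 = 0 := by simp [W]
    linarith
  have hlow : c * ((1 - b ^ 2) * p.eval b ^ 2) ≤ W.eval b := by
    simp only [W, eval_add, eval_mul, eval_C, eval_pow, eval_sub, eval_one, eval_X]
    nlinarith [sq_nonneg ((1 - b ^ 2) * (derivative p).eval b)]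
  have hup : ∫ x in b..1, c * (2 * x * p.eval x ^ 2) ≤
      c * (2 * ∫ x in (-1 : ℝ)..1, p.eval x ^ 2) := by
    calc ∫ x in b..1, c * (2 * x * p.eval x ^ 2)
        ≤ ∫ x in b..1, c * (2 * p.eval x ^ 2) := by
          refine intervalIntegral.integral_mono_on hb.2
            (Continuous.intervalIntegrable (by fun_prop) _ _)
            (Continuous.intervalIntegrable (by fun_prop) _ _) fun x hx => ?_
          have hx1 : x ≤ 1 := hx.2
          have : 0 ≤ c * p.eval x ^ 2 := by positivity
          nlinarith
      _ ≤ ∫ x in (-1 : ℝ)..1, c * (2 * p.eval x ^ 2) :=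
          intervalIntegral.integral_mono_interval hb.1 hb.2 le_rfl
            (Filter.Eventually.of_forall fun x => by positivity)
            (Continuous.intervalIntegrable (by fun_prop) _ _)
      _ = c * (2 * ∫ x in (-1 : ℝ)..1, p.eval x ^ 2) := by
          rw [intervalIntegral.integral_const_mul, intervalIntegral.integral_const_mul]
  exact le_of_mul_le_mul_left (hlow.trans (hWb.le.trans hup)) hc

lemma iteratedDeriv_eval (p : ℝ[X]) (n : ℕ) :
    iteratedDeriv n (fun x => p.eval x) = fun x => (derivative^[n] p).eval x := by
  induction n generalizing p with
  | zero => simp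
  | succ n ih =>
    rw [iteratedDeriv_succ', Function.iterate_succ_apply, ← ih]
    congr 1
    exact funext fun _ => p.deriv

lemma legendreP_eq_eval_rodrigues (n : ℕ) (y : ℝ) :
    legendreP n y = (rodrigues ℝ n).eval y / (2 ^ n * n !) := by
  have h : (fun x : ℝ => (x ^ 2 - 1) ^ n) = fun x => ((X ^ 2 - 1 : ℝ[X]) ^ n).eval x := by
    simp
  rw [legendreP, h, iteratedDeriv_eval, rodrigues, one_div_mul_eq_div]

lemma one_sub_sq_mul_legendreP_sq_le {n : ℕ} (hn : n ≠ 0) {b : ℝ}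
    (hb : b ∈ Set.Icc (-1) 1) :
    (1 - b ^ 2) * legendreP n b ^ 2 ≤ 4 / (2 * n + 1) := by
  have hc : (0 : ℝ) < n * (n + 1) := by positivity
  have h := one_sub_sq_mul_sq_eval_le_of_legendre_ode hc (rodrigues_ode n) hb
  rw [integral_sq_eval_rodrigues] at h
  rw [legendreP_eq_eval_rodrigues, div_pow, mul_div_assoc', div_le_iff₀ (by positivity)]
  calc (1 - b ^ 2) * (rodrigues ℝ n).eval b ^ 2
      ≤ 2 * (2 * (2 ^ n * n ! : ℝ) ^ 2 / (2 * n + 1)) := h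
    _ = 4 / (2 * n + 1) * (2 ^ n * n ! : ℝ) ^ 2 := by ring

lemma abs_legendreP_le {n : ℕ} (hn : n ≠ 0) {b : ℝ} (hb : b ∈ Set.Icc (-0.9 : ℝ) 0.9) :
    |legendreP n b| ≤ 5 / √(2 * n + 1) := by
  have h := one_sub_sq_mul_legendreP_sq_le hn (b := b) ⟨by linarith [hb.1], by linarith [hb.2]⟩
  have hb2 : (19 / 100 : ℝ) ≤ 1 - b ^ 2 := by nlinarith [hb.1, hb.2]
  have hsq : legendreP n b ^ 2 ≤ 5 ^ 2 / (2 * n + 1) := by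
    rw [le_div_iff₀ (by positivity)]
    rw [le_div_iff₀ (by positivity)] at h
    nlinarith [sq_nonneg (legendreP n b)]
  calc |legendreP n b| ≤ √(5 ^ 2 / (2 * n + 1)) := Real.abs_le_sqrt hsq
    _ = 5 / √(2 * n + 1) := by rw [Real.sqrt_div' _ (by positivity), Real.sqrt_sq (by norm_num)]

lemma abs_legendreP_succ_sub_legendreP_pred_le {n : ℕ} (hn : 2 ≤ n) {b : ℝ}
    (hb : b ∈ Set.Icc (-0.9 : ℝ) 0.9) :
    |legendreP (n + 1) b - legendreP (n - 1) b| ≤ 10 / √n := by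
  have hle : ∀ m : ℕ, m ≠ 0 → (n : ℝ) ≤ 2 * m + 1 → |legendreP m b| ≤ 5 / √n :=
    fun m hm hnm => (abs_legendreP_le hm hb).trans <|
      div_le_div_of_nonneg_left (by norm_num) (by positivity) (Real.sqrt_le_sqrt hnm)
  have hn' : (2 : ℝ) ≤ n := by exact_mod_cast hn
  calc |legendreP (n + 1) b - legendreP (n - 1) b|
      ≤ |legendreP (n + 1) b| + |legendreP (n - 1) b| := abs_sub _ _
    _ ≤ 5 / √n + 5 / √n := add_le_add (hle (n + 1) (by omega) (by push_cast; linarith))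
        (hle (n - 1) (by omega) (by rw [Nat.cast_sub (by omega)]; push_cast; linarith))
    _ = 10 / √n := by ring

lemma abs_Bterm_le {K n : ℕ} {b : ℕ → ℝ} {G : ℕ → ℝ → ℝ} {M : ℝ}
    (hM : ∀ i ∈ Finset.Icc 1 K, |legendreP (n + 1) (b i) - legendreP (n - 1) (b i)| ≤ M) :
    |Bterm K b G n| ≤ M * jumpSum K b G / (2 * √(2 * n + 1)) := by
  have hsum : |∑ i ∈ Finset.Icc 1 K, (G (i - 1) (b i) - G i (b i)) *
      (legendreP (n + 1) (b i) - legendreP (n - 1) (b i))| ≤ M * jumpSum K b G := by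
    rw [jumpSum, Finset.mul_sum]
    refine (Finset.abs_sum_le_sum_abs _ _).trans (Finset.sum_le_sum fun i hi => ?_)
    rw [abs_mul, abs_sub_comm, mul_comm M]
    exact mul_le_mul_of_nonneg_left (hM i hi) (abs_nonneg _)
  rw [Bterm, abs_mul, abs_of_nonneg (by positivity), one_div_mul_eq_div]
  gcongr

/-- with interior breakpoints in [-0.9, 0.9], there is a universal
constant C > 0 with |B_n| ≤ C·S/n for all n ≥ 2. -/
theorem abs_Bterm_le_of_interior_breakpoints :
    ∃ C : ℝ, 0 < C ∧
      ∀ (K : ℕ) (b : ℕ → ℝ) (L : ℝ) (G : ℕ → ℝ → ℝ) (g : ℝ → ℝ),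
        b 0 = -1 → b (K + 1) = 1 →
        (∀ i ≤ K, b i < b (i + 1)) →
        0 ≤ L →
        (∀ i ≤ K, ContDiffOn ℝ 1 (G i) (Set.Icc (b i) (b (i + 1)))) →
        (∀ i ≤ K, ∀ y ∈ Set.Icc (b i) (b (i + 1)),
          |derivWithin (G i) (Set.Icc (b i) (b (i + 1))) y| ≤ L) →
        (∀ i < K, ∀ y, b i ≤ y → y < b (i + 1) → g y = G i y) →
        (∀ y ∈ Set.Icc (b K) (b (K + 1)), g y = G K y) →
        (∀ i, 1 ≤ i → i ≤ K → b i ∈ Set.Icc (-0.9 : ℝ) 0.9) →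
        ∀ n : ℕ, 2 ≤ n →
          |Bterm K b G n| ≤ C * jumpSum K b G / (n : ℝ) := by
  refine ⟨5, by norm_num, fun K b _ G _ _ _ _ _ _ _ _ _ hb n hn => ?_⟩
  have hjump : 0 ≤ jumpSum K b G := Finset.sum_nonneg fun _ _ => abs_nonneg _
  have hroot : (n : ℝ) ≤ √n * √(2 * n + 1) := by
    rw [← Real.sqrt_mul (by positivity), Real.le_sqrt (by positivity) (by positivity)]
    nlinarith
  calc |Bterm K b G n|
      ≤ 10 / √n * jumpSum K b G / (2 * √(2 * n + 1)) := abs_Bterm_le fun i hi => by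
        obtain ⟨hi1, hiK⟩ := Finset.mem_Icc.mp hi
        exact abs_legendreP_succ_sub_legendreP_pred_le hn (hb i hi1 hiK)
    _ = 5 * jumpSum K b G / (√n * √(2 * n + 1)) := by field_simp; ring
    _ ≤ 5 * jumpSum K b G / n := by gcongr
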